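/- arXiv:2203.12486 — 7 statements merged into one kernel-verified Lean document; each statement's English description precedes it below -/
import Mathlib

section
/- Let n ≥ 1 and let v : Fin n → Fin n → ℝ be nonnegative valuations (v i t is participant i's value for winning in round t). Suppose a permutation π of Fin n is swap-stable, meaning for all participants i, i', v i (π i) + v i' (π i') ≥ v i (π i') + v i' (π i). Then for every permutation σ of Fin n, 2 * ∑ i, v i (π i) ≥ ∑ i, v i (σ i). In particular the swap-stable allocation is a 2-approximation to the maximum-weight matching. -/
theorem swap_stable_two_approx (n : ℕ) (hn : 1 ≤ n)
    (v : Fin n → Fin n → ℝ) (hv : ∀ i t, 0 ≤ v i t)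
    (π : Equiv.Perm (Fin n))
    (hstable : ∀ i i' : Fin n, v i (π i) + v i' (π i') ≥ v i (π i') + v i' (π i)) :
    ∀ σ : Equiv.Perm (Fin n), 2 * ∑ i, v i (π i) ≥ ∑ i, v i (σ i) := by
  intro σ
  set e : Equiv.Perm (Fin n) := σ.trans π.symm with he
  have key : ∀ i, v i (π i) + v (e i) (π (e i)) ≥ v i (σ i) + v (e i) (π i) := by
    intro i
    have := hstable i (e i)
    simpa [he, Equiv.apply_symm_apply] using this
  have hsum : ∑ i, (v i (σ i) + v (e i) (π i)) ≤ ∑ i, (v i (π i) + v (e i) (π (e i))) := Finset.sum_le_sum (fun i _ => key i)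
  have h1 : ∑ i, v (e i) (π (e i)) = ∑ i, v i (π i) :=
    Equiv.sum_comp e (fun j => v j (π j))
  have h2 : 0 ≤ ∑ i, v (e i) (π i) :=
    Finset.sum_nonneg (fun i _ => hv _ _)
  have := calc ∑ i, v i (σ i) ≤ ∑ i, v i (σ i) + ∑ i, v (e i) (π i) := by linarith
    _ = ∑ i, (v i (σ i) + v (e i) (π i)) := (Finset.sum_add_distrib).symm
    _ ≤ ∑ i, (v i (π i) + v (e i) (π (e i))) := hsum
    _ = ∑ i, v i (π i) + ∑ i, v (e i) (π (e i)) := Finset.sum_add_distrib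
    _ = 2 * ∑ i, v i (π i) := by rw [h1]; ring
  linarith
end

section
/- Inductive payment bound for first-price roscas (abstract form): Let n ≥ 2 and w : Fin n → ℝ be nonnegative, and suppose p : Fin n → ℝ satisfies p(n-1) ≤ w(n-1) and, for each t < n-1, p t ≤ w t + (1/(n-1)) * ∑_{t' = t+1}^{n-1} p t'. Then for every t, p t ≤ w t + (1/(n-1)) * ∑_{t'=t+1}^{n-1} w t' * (n/(n-1))^(t'-t-1). -/
open Finset

/-- Convert a `Fin n` filtered sum over `t < t'` to a sum over `Ico (t+1) n`. -/
lemma fin_filter_sum_eq_ico (n : ℕ) (t : Fin n) (f : Fin n → ℝ) (F : ℕ → ℝ)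
    (hF : ∀ (i : ℕ) (h : i < n), F i = f ⟨i, h⟩) :
    ∑ t' ∈ univ.filter (fun t' : Fin n => t < t'), f t'
      = ∑ i ∈ Ico ((t : ℕ) + 1) n, F i := by
  apply Finset.sum_nbij' (fun (t' : Fin n) => (t' : ℕ))
    (fun i => if h : i < n then (⟨i, h⟩ : Fin n) else t)
  · intro a ha
    simp only [mem_filter, mem_univ, true_and, Fin.lt_def] at ha
    simp only [mem_Ico]
    exact ⟨by omega, a.isLt⟩
  · intro i hi
    simp only [mem_Ico] at hi
    simp only [dif_pos hi.2, mem_filter, mem_univ, true_and, Fin.lt_def]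
    omega
  · intro a _; simp [a.isLt]
  · intro i hi
    simp only [mem_Ico] at hi
    simp [dif_pos hi.2]
  · intro a _; rw [hF a a.isLt]

open Finset in
theorem firstprice_payment_bound (n : ℕ) (hn : 2 ≤ n)
    (w : Fin n → ℝ) (hw : ∀ t, 0 ≤ w t)
    (p : Fin n → ℝ)
    (hlast : ∀ t : Fin n, (t : ℕ) = n - 1 → p t ≤ w t)
    (hrec : ∀ t : Fin n, (t : ℕ) < n - 1 →
      p t ≤ w t + (1 / ((n : ℝ) - 1)) *
        ∑ t' ∈ univ.filter (fun t' : Fin n => t < t'), p t') :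
    ∀ t : Fin n, p t ≤ w t + (1 / ((n : ℝ) - 1)) *
      ∑ t' ∈ univ.filter (fun t' : Fin n => t < t'),
        w t' * ((n : ℝ) / ((n : ℝ) - 1)) ^ ((t' : ℕ) - (t : ℕ) - 1) := by
  set c : ℝ := 1 / ((n : ℝ) - 1) with hc
  set r : ℝ := (n : ℝ) / ((n : ℝ) - 1) with hr
  have hn1 : (1 : ℝ) ≤ (n : ℝ) - 1 := by
    have : (2 : ℝ) ≤ (n : ℝ) := by exact_mod_cast hn
    linarith
  have hne : (n : ℝ) - 1 ≠ 0 := by linarith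
  have hcpos : 0 ≤ c := by rw [hc]; positivity
  have hrc : r = 1 + c := by rw [hr, hc]; field_simp; ring
  set W : ℕ → ℝ := fun i => if h : i < n then w ⟨i, h⟩ else 0 with hWdef
  set P : ℕ → ℝ := fun i => if h : i < n then p ⟨i, h⟩ else 0 with hPdef
  have hWnn : ∀ i, 0 ≤ W i := by
    intro i; rw [hWdef]; dsimp only; split
    · exact hw _
    · exact le_refl 0
  set F : ℕ → ℝ := fun t => ∑ i ∈ Ico (t + 1) n, W i * r ^ (i - t - 1) with hFdef
  -- key identity
  have hid : ∀ k t, n - t = k → ∑ i ∈ Ico (t + 1) n, (W i + c * F i) = F t := by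
    intro k
    induction k using Nat.strong_induction_on with
    | _ k ih =>
      intro t hk
      by_cases h : n ≤ t + 1
      · rw [hFdef]; dsimp only
        rw [show Ico (t + 1) n = ∅ from Ico_eq_empty (by omega)]
        simp
      · push_neg at h
        have h2 : ∑ i ∈ Ico (t + 1 + 1) n, (W i + c * F i) = F (t + 1) :=
          ih (n - (t + 1)) (by omega) (t + 1) rfl
        rw [Finset.sum_eq_sum_Ico_succ_bot h, h2]
        have h3 : F t = W (t + 1) + r * F (t + 1) := by
          rw [hFdef]; dsimp only
          rw [Finset.sum_eq_sum_Ico_succ_bot h]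
          rw [Finset.mul_sum]
          congr 1
          · simp
          · apply Finset.sum_congr rfl
            intro i hi
            simp only [mem_Ico] at hi
            have : i - t - 1 = (i - (t + 1) - 1) + 1 := by omega
            rw [this, pow_succ]
            ring
        rw [h3, hrc]; ring
  -- main inductive bound
  have hmain : ∀ k t (ht : t < n), n - t = k → P t ≤ W t + c * F t := by
    intro k
    induction k using Nat.strong_induction_on with
    | _ k ih =>
      intro t ht hk
      have hPW : P t = p ⟨t, ht⟩ := by rw [hPdef]; simp [dif_pos ht]
      have hWw : W t = w ⟨t, ht⟩ := by rw [hWdef]; simp [dif_pos ht]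
      by_cases h : t = n - 1
      · have hF0 : F t = 0 := by
          rw [hFdef]; dsimp only
          rw [Ico_eq_empty (by omega)]; simp
        rw [hF0, hPW, hWw, mul_zero, add_zero]
        exact hlast ⟨t, ht⟩ (by simpa using h)
      · have hlt : t < n - 1 := by omega
        have hr1 := hrec ⟨t, ht⟩ (by simpa using hlt)
        have hconv : ∑ t' ∈ univ.filter (fun t' : Fin n => (⟨t, ht⟩ : Fin n) < t'), p t'
            = ∑ i ∈ Ico (t + 1) n, P i := by
          apply fin_filter_sum_eq_ico
          intro i hi; rw [hPdef]; simp [dif_pos hi]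
        rw [hconv] at hr1
        have hstep : ∑ i ∈ Ico (t + 1) n, P i ≤ ∑ i ∈ Ico (t + 1) n, (W i + c * F i) := by
          apply Finset.sum_le_sum
          intro i hi
          simp only [mem_Ico] at hi
          exact ih (n - i) (by omega) i hi.2 rfl
        have hideq := hid (n - t) t rfl
        rw [hPW, hWw] at *
        calc p ⟨t, ht⟩ ≤ w ⟨t, ht⟩ + c * ∑ i ∈ Ico (t + 1) n, P i := hr1
          _ ≤ w ⟨t, ht⟩ + c * ∑ i ∈ Ico (t + 1) n, (W i + c * F i) := by
              have := mul_le_mul_of_nonneg_left hstep hcpos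
              linarith
          _ = w ⟨t, ht⟩ + c * F t := by rw [hideq]
  -- conclude
  intro t
  have hb := hmain (n - (t : ℕ)) (t : ℕ) t.isLt rfl
  have hPW : P (t : ℕ) = p t := by rw [hPdef]; simp [dif_pos t.isLt]
  have hWw : W (t : ℕ) = w t := by rw [hWdef]; simp [dif_pos t.isLt]
  have hconv : ∑ t' ∈ univ.filter (fun t' : Fin n => t < t'),
      w t' * r ^ ((t' : ℕ) - (t : ℕ) - 1)
      = F (t : ℕ) := by
    rw [hFdef]; dsimp only
    apply fin_filter_sum_eq_ico
    intro i hi; rw [hWdef]; simp [dif_pos hi]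
  rw [← hconv, hPW, hWw] at hb
  exact hb
end

section
/- Nonlinear up-front rosca smoothness deviation bound: let 0 < α ≤ β, let v > 0, b̂ ≥ 0, ρ ∈ (0, 2/β], and let C : ℝ → ℝ satisfy C(x) ≤ β*x for x ≥ 0. If b̂ ≤ ρ*v, then (1/(ρ*v)) * ∫_{b̂}^{ρ*v} (v − β*x) dx ≥ v − b̂/ρ − β*ρ*v/2; and if b̂ > ρ*v, then 0 ≥ v − b̂/ρ − β*ρ*v/2. -/
theorem intervalIntegral.integral_const_sub_const_mul_id (a b c k : ℝ) :
    ∫ x in a..b, (c - k * x) = c * (b - a) - k * (b ^ 2 - a ^ 2) / 2 := by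
  rw [intervalIntegral.integral_sub intervalIntegrable_const
      (intervalIntegral.intervalIntegrable_id.const_mul k),
    intervalIntegral.integral_const, intervalIntegral.integral_const_mul, integral_id,
    smul_eq_mul]
  ring

theorem average_const_sub_mul_eq {β v bhat ρ : ℝ} (hρv : ρ * v ≠ 0) :
    (1 / (ρ * v)) * ∫ x in bhat..(ρ * v), (v - β * x)
      = v - bhat / ρ - β * ρ * v / 2 + β * bhat ^ 2 / (2 * (ρ * v)) := by
  have hρ : ρ ≠ 0 := left_ne_zero_of_mul hρv
  have hv : v ≠ 0 := right_ne_zero_of_mul hρv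
  rw [intervalIntegral.integral_const_sub_const_mul_id]
  field_simp
  ring

theorem upfront_deviation_bound_general (β v bhat ρ : ℝ)
    (hv : 0 < v)
    (hρ0 : 0 < ρ) (hρ : ρ ≤ 2 / β) :
    (bhat ≤ ρ * v →
      (1 / (ρ * v)) * ∫ x in bhat..(ρ * v), (v - β * x)
        ≥ v - bhat / ρ - β * ρ * v / 2) ∧
    (bhat > ρ * v → (0 : ℝ) ≥ v - bhat / ρ - β * ρ * v / 2) := by
  have hβ : 0 < β := by simpa using hρ0.trans_le hρ
  have hρv : 0 < ρ * v := mul_pos hρ0 hv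
  refine ⟨fun _ => ?_, fun hgt => ?_⟩
  · rw [average_const_sub_mul_eq hρv.ne', ge_iff_le, le_add_iff_nonneg_right]
    positivity
  · have hv_lt : v < bhat / ρ := (lt_div_iff₀ hρ0).mpr (by linarith)
    have hslack : 0 ≤ β * ρ * v := by positivity
    linarith

theorem upfront_deviation_bound (α β v bhat ρ : ℝ) (C : ℝ → ℝ)
    (hα : 0 < α) (hαβ : α ≤ β) (hv : 0 < v) (hb : 0 ≤ bhat)
    (hρ0 : 0 < ρ) (hρ : ρ ≤ 2 / β)
    (hC : ∀ x : ℝ, 0 ≤ x → C x ≤ β * x) :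
    (bhat ≤ ρ * v →
      (1 / (ρ * v)) * ∫ x in bhat..(ρ * v), (v - β * x)
        ≥ v - bhat / ρ - β * ρ * v / 2) ∧
    (bhat > ρ * v → (0 : ℝ) ≥ v - bhat / ρ - β * ρ * v / 2) :=
  upfront_deviation_bound_general β v bhat ρ hv hρ0 hρ
end

section
/- Optimizing the nonlinear up-front rosca bound: let 0 < α ≤ β and set ρ = (β + √(β(2α+β))) / (β(α+β+√(β(2α+β)))). Then ρ ∈ (0, 2/β], and for all OPT, W ≥ 0 satisfying W ≥ (1 − ρβ/2)*OPT − (1/ρ)*(W/α), one has OPT ≤ ((α + β + √(β(2α+β)))/α) * W. -/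
theorem upfront_nonlinear_poa (α β : ℝ) (hα : 0 < α) (hαβ : α ≤ β) :
    let ρ := (β + Real.sqrt (β * (2 * α + β))) /
      (β * (α + β + Real.sqrt (β * (2 * α + β))))
    0 < ρ ∧ ρ ≤ 2 / β ∧
    ∀ OPT W : ℝ, 0 ≤ OPT → 0 ≤ W →
      W ≥ (1 - ρ * β / 2) * OPT - (1 / ρ) * (W / α) →
      OPT ≤ ((α + β + Real.sqrt (β * (2 * α + β))) / α) * W := by
  intro ρ
  have hβ : 0 < β := lt_of_lt_of_le hα hαβ
  set s := Real.sqrt (β * (2 * α + β)) with hsdef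
  have hs0 : 0 ≤ s := Real.sqrt_nonneg _
  have hs2 : s ^ 2 = β * (2 * α + β) := by
    rw [hsdef, sq, Real.mul_self_sqrt (by positivity)]
  have hρe : ρ = (β + s) / (β * (α + β + s)) := rfl
  clear_value s
  clear hsdef
  have hT : 0 < α + β + s := by positivity
  have hnum : 0 < β + s := by positivity
  have hden : 0 < β * (α + β + s) := by positivity
  have hρ : 0 < ρ := by rw [hρe]; exact div_pos hnum hden
  refine ⟨hρ, ?_, ?_⟩
  · rw [hρe, div_le_div_iff₀ hden hβ]
    nlinarith [mul_pos hα hβ, mul_nonneg hβ.le hs0]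
  · intro OPT W hOPT hW hineq
    have hρβ1 : ρ * β ≤ 1 := by
      rw [hρe, div_mul_eq_mul_div, div_le_one hden]
      nlinarith [mul_nonneg hα.le hs0]
    have hρβ : 0 < 1 - ρ * β / 2 := by linarith
    have key : 1 + 1 / (ρ * α) = ((α + β + s) / α) * (1 - ρ * β / 2) := by
      rw [hρe]
      field_simp
      linear_combination (-1 : ℝ) * hs2
    have e : (1 / ρ) * (W / α) = W * (1 / (ρ * α)) := by
      field_simp
    have h1 : (1 - ρ * β / 2) * OPT ≤ W * (1 + 1 / (ρ * α)) := by
      rw [mul_add, mul_one, ← e]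
      linarith
    rw [key] at h1
    have h2 : (1 - ρ * β / 2) * OPT ≤ (1 - ρ * β / 2) * (((α + β + s) / α) * W) := by
      linarith [h1]
    exact le_of_mul_le_mul_left (by linarith) hρβ
end

section
/- Nonlinear payment vs. utility bound: let C : ℝ → ℝ satisfy α*x ≤ C(x) ≤ β*x for x ≥ 0 and β*x ≤ C(x) ≤ α*x for x ≤ 0 (with 0 < α ≤ β). Suppose participants i ∈ Fin n have allocated values Vᵢ ≥ 0, gross payments matrices p̂ᵢᵗ ≥ 0 and rebates r̂ᵢᵗ ≥ 0 with ∑ᵢ∑ₜ p̂ᵢᵗ = ∑ᵢ∑ₜ r̂ᵢᵗ (budget balance), and no-overbidding: ∑ₜ C(p̂ᵢᵗ) ≤ Vᵢ for each i. Define each participant's utility uᵢ = Vᵢ − ∑ₜ C(p̂ᵢᵗ) − ∑ₜ C(−r̂ᵢᵗ). Then ∑ᵢ∑ₜ p̂ᵢᵗ ≤ (1/α) * ∑ᵢ uᵢ. -/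
/-! Budget balance turns total gross payments into total rebates. Below zero `C` lies under the
line of slope `α`, so a rebate `r` adds at least `α * r` to utility, while no-overbidding keeps
the rest of each utility, `V i - ∑ t, C (phat i t)`, nonnegative. -/

open Finset

lemma mul_sum_le_neg_sum_neg {ι : Type*} (s : Finset ι) {α : ℝ} {C : ℝ → ℝ}
    (hC : ∀ x : ℝ, x ≤ 0 → C x ≤ α * x) {r : ι → ℝ} (hr : ∀ i ∈ s, 0 ≤ r i) :
    α * ∑ i ∈ s, r i ≤ -∑ i ∈ s, C (-r i) := by
  rw [mul_sum, ← sum_neg_distrib]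
  refine sum_le_sum fun i hi => ?_
  have := hC (-r i) (neg_nonpos.mpr (hr i hi))
  linarith

theorem nonlinear_payment_vs_utility_general (n : ℕ) (α β : ℝ)
    (hα : 0 < α)
    (C : ℝ → ℝ)
    (hCneg : ∀ x : ℝ, x ≤ 0 → β * x ≤ C x ∧ C x ≤ α * x)
    (V : Fin n → ℝ)
    (phat rhat : Fin n → Fin n → ℝ)
    (hrhat : ∀ i t, 0 ≤ rhat i t)
    (hbb : ∑ i, ∑ t, phat i t = ∑ i, ∑ t, rhat i t)
    (hnob : ∀ i, ∑ t, C (phat i t) ≤ V i)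
    (u : Fin n → ℝ)
    (hu : ∀ i, u i = V i - ∑ t, C (phat i t) - ∑ t, C (-(rhat i t))) :
    ∑ i, ∑ t, phat i t ≤ (1 / α) * ∑ i, u i := by
  have rebate_le_utility (i : Fin n) : α * ∑ t, rhat i t ≤ u i := by
    have hrebate := mul_sum_le_neg_sum_neg univ (fun x hx => (hCneg x hx).2)
      (fun t _ => hrhat i t)
    linarith [hu i, hnob i]
  rw [hbb, one_div, le_inv_mul_iff₀ hα, mul_sum]
  exact sum_le_sum fun i _ => rebate_le_utility i

theorem nonlinear_payment_vs_utility (n : ℕ) (α β : ℝ)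
    (hα : 0 < α) (hαβ : α ≤ β)
    (C : ℝ → ℝ)
    (hCpos : ∀ x : ℝ, 0 ≤ x → α * x ≤ C x ∧ C x ≤ β * x)
    (hCneg : ∀ x : ℝ, x ≤ 0 → β * x ≤ C x ∧ C x ≤ α * x)
    (V : Fin n → ℝ) (hV : ∀ i, 0 ≤ V i)
    (phat rhat : Fin n → Fin n → ℝ)
    (hphat : ∀ i t, 0 ≤ phat i t) (hrhat : ∀ i t, 0 ≤ rhat i t)
    (hbb : ∑ i, ∑ t, phat i t = ∑ i, ∑ t, rhat i t)
    (hnob : ∀ i, ∑ t, C (phat i t) ≤ V i)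
    (u : Fin n → ℝ)
    (hu : ∀ i, u i = V i - ∑ t, C (phat i t) - ∑ t, C (-(rhat i t))) :
    ∑ i, ∑ t, phat i t ≤ (1 / α) * ∑ i, u i :=
  nonlinear_payment_vs_utility_general n α β hα C hCneg V phat rhat hrhat hbb hnob u hu
end

section
/- Nonlinear value vs. utility bound: under the same setup as the payment bound (C with α*x ≤ C(x) ≤ β*x for x ≥ 0, β*x ≤ C(x) ≤ α*x for x ≤ 0, 0 < α ≤ β; budget balance ∑ᵢ∑ₜ p̂ᵢᵗ = ∑ᵢ∑ₜ r̂ᵢᵗ; no-overbidding ∑ₜ C(p̂ᵢᵗ) ≤ Vᵢ), the total allocated value satisfies ∑ᵢ Vᵢ ≤ (β/α) * ∑ᵢ uᵢ, where uᵢ = Vᵢ − ∑ₜ C(p̂ᵢᵗ) − ∑ₜ C(−r̂ᵢᵗ). -/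
/-!
Let `P` be the total disutility of payments, `R` the total disutility of rebates and `S` the
total amount paid, which by budget balance is also the total amount rebated. The bounds on `C`
give `P ≤ β S` and `R ≤ -α S ≤ -(α / β) P`, so the total utility `∑ V - P - R` is at least
`∑ V - (1 - α / β) P ≥ (α / β) ∑ V`, the last step by no-overbidding, `P ≤ ∑ V`.
-/

open Finset

theorem sum_sum_comp_le_mul_sum_sum {ι τ : Type*} [Fintype ι] [Fintype τ] {g : ℝ → ℝ} {c : ℝ}
    (x : ι → τ → ℝ) (h : ∀ i t, g (x i t) ≤ c * x i t) :
    ∑ i, ∑ t, g (x i t) ≤ c * ∑ i, ∑ t, x i t := by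
  simp only [mul_sum]
  exact sum_le_sum fun i _ => sum_le_sum fun t _ => h i t

theorem le_div_mul_sub_sub_of_le_mul {α β W P R S : ℝ} (hα : 0 < α) (hαβ : α ≤ β)
    (hP : P ≤ β * S) (hR : R ≤ -α * S) (hPW : P ≤ W) :
    W ≤ β / α * (W - P - R) := by
  rw [div_mul_eq_mul_div, le_div_iff₀ hα]
  nlinarith [mul_le_mul_of_nonneg_left hP hα.le]

theorem nonlinear_value_vs_utility_general (n : ℕ) (α β : ℝ)
    (hα : 0 < α) (hαβ : α ≤ β)
    (C : ℝ → ℝ)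
    (hCpos : ∀ x : ℝ, 0 ≤ x → α * x ≤ C x ∧ C x ≤ β * x)
    (hCneg : ∀ x : ℝ, x ≤ 0 → β * x ≤ C x ∧ C x ≤ α * x)
    (V : Fin n → ℝ)
    (phat rhat : Fin n → Fin n → ℝ)
    (hphat : ∀ i t, 0 ≤ phat i t) (hrhat : ∀ i t, 0 ≤ rhat i t)
    (hbb : ∑ i, ∑ t, phat i t = ∑ i, ∑ t, rhat i t)
    (hnob : ∀ i, ∑ t, C (phat i t) ≤ V i)
    (u : Fin n → ℝ)
    (hu : ∀ i, u i = V i - ∑ t, C (phat i t) - ∑ t, C (-(rhat i t))) :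
    ∑ i, V i ≤ (β / α) * ∑ i, u i := by
  have hpay : ∑ i, ∑ t, C (phat i t) ≤ β * ∑ i, ∑ t, phat i t :=
    sum_sum_comp_le_mul_sum_sum phat fun i t => (hCpos _ (hphat i t)).2
  have hrebate : ∑ i, ∑ t, C (-rhat i t) ≤ -α * ∑ i, ∑ t, phat i t := by
    rw [hbb]
    refine sum_sum_comp_le_mul_sum_sum (g := fun x => C (-x)) rhat fun i t => ?_
    simpa using (hCneg _ (neg_nonpos.2 (hrhat i t))).2
  have hoverbid : ∑ i, ∑ t, C (phat i t) ≤ ∑ i, V i := sum_le_sum fun i _ => hnob i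
  have hutility : ∑ i, u i = ∑ i, V i - ∑ i, ∑ t, C (phat i t) - ∑ i, ∑ t, C (-rhat i t) := by
    simp only [hu, sum_sub_distrib]
  rw [hutility]
  exact le_div_mul_sub_sub_of_le_mul hα hαβ hpay hrebate hoverbid

theorem nonlinear_value_vs_utility (n : ℕ) (α β : ℝ)
    (hα : 0 < α) (hαβ : α ≤ β)
    (C : ℝ → ℝ)
    (hCpos : ∀ x : ℝ, 0 ≤ x → α * x ≤ C x ∧ C x ≤ β * x)
    (hCneg : ∀ x : ℝ, x ≤ 0 → β * x ≤ C x ∧ C x ≤ α * x)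
    (V : Fin n → ℝ) (hV : ∀ i, 0 ≤ V i)
    (phat rhat : Fin n → Fin n → ℝ)
    (hphat : ∀ i t, 0 ≤ phat i t) (hrhat : ∀ i t, 0 ≤ rhat i t)
    (hbb : ∑ i, ∑ t, phat i t = ∑ i, ∑ t, rhat i t)
    (hnob : ∀ i, ∑ t, C (phat i t) ≤ V i)
    (u : Fin n → ℝ)
    (hu : ∀ i, u i = V i - ∑ t, C (phat i t) - ∑ t, C (-(rhat i t))) :
    ∑ i, V i ≤ (β / α) * ∑ i, u i :=
  nonlinear_value_vs_utility_general n α β hα hαβ C hCpos hCneg V phat rhat hphat hrhat hbb hnob u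
    hu
end

section
/- Second-price nonlinear single-item smoothness: let C : ℝ → ℝ be a strictly monotone increasing continuous function with C(0)=0 and unbounded above, and let values v : Fin n → ℝ be nonnegative with maximum vₕ attained at index h. For any bid profile a : Fin n → ℝ with all aᵢ ≥ 0, consider the deviation where h bids C⁻¹(vₕ): in a second-price auction (winner = highest bidder, pays disutility C of the second-highest bid), the deviating bidder's utility is at least vₕ − C(max over i of aᵢ). Hence the auction is (1, 0, 1)-smooth with respect to the disutility of the winning bid. -/
/-! Bidding `b = C⁻¹(v h)` (which exists by the intermediate value theorem) is safe: if `h` wins,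
it pays `C` of an opposing bid, which is at most `C (max a)`; if it loses, some bid exceeds `b`,
so `C (max a) ≥ C b = v h` and the right-hand side is nonpositive. -/

lemma exists_nonneg_apply_eq_of_monotone {C : ℝ → ℝ} (hmono : Monotone C) (hcont : Continuous C)
    (hC0 : C 0 = 0) (hunbdd : ∀ M : ℝ, ∃ x : ℝ, M < C x) {y : ℝ} (hy : 0 ≤ y) :
    ∃ b, 0 ≤ b ∧ C b = y := by
  obtain ⟨x, hx⟩ := hunbdd y
  have hx0 : 0 ≤ x := by
    by_contra! hneg
    linarith [hC0 ▸ hmono hneg.le]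
  have hy_mem : y ∈ Set.Icc (C 0) (C x) := ⟨hC0.symm ▸ hy, hx.le⟩
  obtain ⟨b, hb_mem, hb⟩ := intermediate_value_Icc hx0 hcont.continuousOn hy_mem
  exact ⟨b, hb_mem.1, hb⟩

lemma sub_apply_le_ite_of_apply_eq {C : ℝ → ℝ} (hmono : Monotone C) {b p M v : ℝ}
    (hb : C b = v) (hpM : p ≤ M) :
    v - C M ≤ if p ≤ b then v - C p else 0 := by
  split_ifs with hpb
  · linarith [hmono hpM]
  · linarith [hmono ((not_le.mp hpb).le.trans hpM)]

open Finset in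
theorem secondprice_nonlinear_smooth (n : ℕ) (hn : 2 ≤ n)
    (C : ℝ → ℝ) (hmono : StrictMono C) (hcont : Continuous C)
    (hC0 : C 0 = 0) (hunbdd : ∀ M : ℝ, ∃ x : ℝ, M < C x)
    (v : Fin n → ℝ) (hv : ∀ i, 0 ≤ v i)
    (h : Fin n) :
    ∃ b : ℝ, 0 ≤ b ∧ C b = v h ∧
      ∀ a : Fin n → ℝ, (∀ i, 0 ≤ a i) →
        ∀ mOpp : ℝ,
          (∀ i, i ≠ h → a i ≤ mOpp) → (∃ i, i ≠ h ∧ a i = mOpp) →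
          -- deviation utility: h bids b; wins (ties broken for h) iff mOpp ≤ b,
          -- paying the second-highest bid mOpp; otherwise utility 0
          (if mOpp ≤ b then v h - C mOpp else 0)
            ≥ v h - C (univ.sup' (by simp [Finset.univ_nonempty_iff]; exact Fin.pos_iff_nonempty.mp (by omega)) a) := by
  obtain ⟨b, hb0, hb⟩ :=
    exists_nonneg_apply_eq_of_monotone hmono.monotone hcont hC0 hunbdd (hv h)
  refine ⟨b, hb0, hb, fun a _ mOpp _ ⟨i, _, hia⟩ => ?_⟩
  exact sub_apply_le_ite_of_apply_eq hmono.monotone hb (hia ▸ le_sup' a (mem_univ i))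
end
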